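/- Let E and F be topological VE-spaces over the same topologically ordered *-space Z, let p ∈ S_*(Z), and let T : E → F be an adjointable linear operator. Then the quotient operator T_p : E_p → F_p defined by T_p(x + Ĩ_p^E) := Tx + Ĩ_p^F is a well-defined linear map (i.e., p̃_E(x) = 0 implies p̃_F(Tx) = 0), and T_p is adjointable with respect to the quotient gramians with adjoint T_p* = (T*)_p, i.e., [T_p(x + Ĩ_p^E), y + Ĩ_p^F]_{F_p} = [x + Ĩ_p^E, (T*)_p(y + Ĩ_p^F)]_{E_p} for all x ∈ E, y ∈ F. -/
import Mathlib


open scoped ComplexConjugate Topology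

/-- The data of an ordered `*`-space structure on a complex vector space `Z`:
a conjugate-linear involution and a strict convex cone of selfadjoint elements. -/
structure OrderedStarData (Z : Type*) [AddCommGroup Z] [Module ℂ Z] where
  star : Z → Z
  star_add : ∀ x y : Z, star (x + y) = star x + star y
  star_smul : ∀ (c : ℂ) (x : Z), star (c • x) = (starRingEnd ℂ) c • star x
  star_star : ∀ x : Z, star (star x) = x
  cone : Set Z
  cone_zero : (0 : Z) ∈ cone
  cone_add : ∀ x ∈ cone, ∀ y ∈ cone, x + y ∈ cone
  cone_smul : ∀ r : ℝ, 0 ≤ r → ∀ x ∈ cone, (r : ℂ) • x ∈ cone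
  cone_strict : ∀ x ∈ cone, -x ∈ cone → x = 0
  cone_star : ∀ x ∈ cone, star x = x

namespace OrderedStarData

variable {Z : Type*} [AddCommGroup Z] [Module ℂ Z]

/-- A seminorm is increasing when `0 ≤ x ≤ y` implies `p x ≤ p y`. -/
def Increasing (D : OrderedStarData Z) (p : Seminorm ℂ Z) : Prop :=
  ∀ x y : Z, x ∈ D.cone → y - x ∈ D.cone → p x ≤ p y

/-- A `*`-seminorm: `p (z*) = p z`. -/
def StarSeminorm (D : OrderedStarData Z) (p : Seminorm ℂ Z) : Prop :=
  ∀ z : Z, p (D.star z) = p z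

end OrderedStarData

/-- A topologically ordered `*`-space: an ordered `*`-space with a Hausdorff locally convex
topology generated by a family of increasing seminorms, continuous involution and closed cone. -/
structure TopOrderedStarSpace (Z : Type*) [AddCommGroup Z] [Module ℂ Z]
    [TopologicalSpace Z] extends OrderedStarData Z where
  t2 : T2Space Z
  star_continuous : Continuous star
  cone_closed : IsClosed cone
  seminorms_generate : ∃ (ι : Type) (hι : Nonempty ι) (q : ι → Seminorm ℂ Z),
      (∀ i, ∀ x y : Z, x ∈ cone → y - x ∈ cone → q i x ≤ q i y) ∧
      (letI := hι; WithSeminorms q)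

namespace TopOrderedStarSpace

variable {Z : Type*} [AddCommGroup Z] [Module ℂ Z] [TopologicalSpace Z]

/-- Membership in `S_*(Z)`, the set of continuous increasing `*`-seminorms. -/
def MemSStar (D : TopOrderedStarSpace Z) (p : Seminorm ℂ Z) : Prop :=
  Continuous ⇑p ∧ D.toOrderedStarData.Increasing p ∧ D.toOrderedStarData.StarSeminorm p

end TopOrderedStarSpace

/-- The topology of `Z` is generated by the family of seminorms `S`. -/
def GeneratesTopology {Z : Type*} [AddCommGroup Z] [Module ℂ Z] [TopologicalSpace Z]
    (S : Set (Seminorm ℂ Z)) : Prop :=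
  ∃ h : Nonempty ↥S, letI := h; WithSeminorms (fun p : ↥S => (p : Seminorm ℂ Z))

/-- A `Z`-valued gramian (vector valued inner product) on `E`, making `E` a VE-space over `Z`. -/
structure Gramian {Z : Type*} [AddCommGroup Z] [Module ℂ Z] (D : OrderedStarData Z)
    (E : Type*) [AddCommGroup E] [Module ℂ E] where
  inner : E → E → Z
  inner_self_mem : ∀ x : E, inner x x ∈ D.cone
  inner_self_eq_zero : ∀ x : E, inner x x = 0 → x = 0
  inner_herm : ∀ x y : E, inner x y = D.star (inner y x)
  inner_add_right : ∀ x y₁ y₂ : E, inner x (y₁ + y₂) = inner x y₁ + inner x y₂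
  inner_smul_right : ∀ (a : ℂ) (x y : E), inner x (a • y) = a • inner x y

namespace Gramian

variable {Z : Type*} [AddCommGroup Z] [Module ℂ Z] {D : OrderedStarData Z}
  {E : Type*} [AddCommGroup E] [Module ℂ E]
  {F : Type*} [AddCommGroup F] [Module ℂ F]

/-- The seminorm `p̃ x = p ([x,x])^{1/2}` induced on a VE-space by a seminorm on `Z`. -/
noncomputable def tilde (B : Gramian D E) (p : Seminorm ℂ Z) (x : E) : ℝ :=
  Real.sqrt (p (B.inner x x))

/-- `S` is an adjoint of `T` : `[Tx, y] = [x, Sy]`. -/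
def IsAdjoint (BE : Gramian D E) (BF : Gramian D F) (T : E →ₗ[ℂ] F) (S : F →ₗ[ℂ] E) : Prop :=
  ∀ (x : E) (y : F), BF.inner (T x) y = BE.inner x (S y)

/-- `T` is adjointable. -/
def Adjointable (BE : Gramian D E) (BF : Gramian D F) (T : E →ₗ[ℂ] F) : Prop :=
  ∃ S : F →ₗ[ℂ] E, BE.IsAdjoint BF T S

/-- `T` is bounded for the seminorm `p` : `p̃ (Tx) ≤ C p̃ x`. -/
def BoundedFor (BE : Gramian D E) (BF : Gramian D F) (T : E →ₗ[ℂ] F) (p : Seminorm ℂ Z) : Prop :=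
  ∃ C : ℝ, 0 ≤ C ∧ ∀ x : E, BF.tilde p (T x) ≤ C * BE.tilde p x

/-- The operator seminorm `p̄ T`, the infimum of the admissible bounds. -/
noncomputable def opSeminorm (BE : Gramian D E) (BF : Gramian D F) (T : E →ₗ[ℂ] F)
    (p : Seminorm ℂ Z) : ℝ :=
  sInf {C : ℝ | 0 ≤ C ∧ ∀ x : E, BF.tilde p (T x) ≤ C * BE.tilde p x}

/-- The topology of `E` is the one of a topological VE-space: it is generated by the
seminorms `p̃` for `p ∈ S`. -/
def IsVETopology [TopologicalSpace E] (B : Gramian D E) (S : Set (Seminorm ℂ Z)) : Prop :=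
  ∃ h : Nonempty ↥S, letI := h;
    ∃ q : ↥S → Seminorm ℂ E, (∀ (p : ↥S) (x : E), q p x = B.tilde p.1 x) ∧ WithSeminorms q

end Gramian

/-- A barrel: a closed, absorbent, balanced, convex set. -/
def IsBarrel {E : Type*} [AddCommGroup E] [Module ℂ E] [TopologicalSpace E] (s : Set E) : Prop :=
  IsClosed s ∧ Absorbent ℂ s ∧ Balanced ℂ s ∧ Convex ℝ s

/-- A (complex) topological vector space is barrelled if every barrel is a neighbourhood of `0`. -/
def BarrelledSp (E : Type*) [AddCommGroup E] [Module ℂ E] [TopologicalSpace E] : Prop :=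
  ∀ s : Set E, IsBarrel s → s ∈ 𝓝 (0 : E)

/-- A barrel with respect to the topology of a norm function `N`. -/
def IsBarrelWrtNorm {V : Type*} [AddCommGroup V] [Module ℂ V] (N : V → ℝ) (s : Set V) : Prop :=
  (∀ x : V, (∀ ε : ℝ, 0 < ε → ∃ y ∈ s, N (x - y) < ε) → x ∈ s) ∧
  Absorbent ℂ s ∧ Balanced ℂ s ∧ Convex ℝ s

/-- Barrelledness with respect to the topology of a norm function `N`. -/
def BarrelledWrtNorm {V : Type*} [AddCommGroup V] [Module ℂ V] (N : V → ℝ) : Prop :=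
  ∀ s : Set V, IsBarrelWrtNorm N s → ∃ ε : ℝ, 0 < ε ∧ ∀ x : V, N x < ε → x ∈ s

/-- The kernel of a seminorm, as a submodule. -/
def semKer {Z : Type*} [AddCommGroup Z] [Module ℂ Z] (p : Seminorm ℂ Z) : Submodule ℂ Z where
  carrier := {z | p z = 0}
  add_mem' := by
    intro a b ha hb
    simp only [Set.mem_setOf_eq] at ha hb ⊢
    exact le_antisymm ((map_add_le_add p a b).trans (by simp [ha, hb])) (apply_nonneg p _)
  zero_mem' := map_zero p
  smul_mem' := by
    intro c x hx
    simp only [Set.mem_setOf_eq] at hx ⊢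
    rw [map_smul_eq_mul, hx, mul_zero]

section Aux

variable {Z : Type*} [AddCommGroup Z] [Module ℂ Z] {D : OrderedStarData Z}
  {E : Type*} [AddCommGroup E] [Module ℂ E]

namespace Gramian

lemma star_inner' (B : Gramian D E) (x y : E) : D.star (B.inner x y) = B.inner y x := by
  rw [B.inner_herm y x]

lemma inner_neg_right' (B : Gramian D E) (x y : E) : B.inner x (-y) = -B.inner x y := by
  rw [← neg_one_smul ℂ y, B.inner_smul_right, neg_one_smul]

lemma inner_sub_right' (B : Gramian D E) (x a b : E) :
    B.inner x (a - b) = B.inner x a - B.inner x b := by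
  rw [sub_eq_add_neg, B.inner_add_right, B.inner_neg_right', sub_eq_add_neg]

lemma inner_add_left' (B : Gramian D E) (a b y : E) :
    B.inner (a + b) y = B.inner a y + B.inner b y := by
  rw [B.inner_herm, B.inner_add_right, D.star_add, B.star_inner', B.star_inner']

lemma inner_smul_left' (B : Gramian D E) (c : ℂ) (a y : E) :
    B.inner (c • a) y = (starRingEnd ℂ) c • B.inner a y := by
  rw [B.inner_herm, B.inner_smul_right, D.star_smul, B.star_inner']

lemma inner_sub_left' (B : Gramian D E) (a b y : E) :
    B.inner (a - b) y = B.inner a y - B.inner b y := by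
  have : a - b = a + (-1 : ℂ) • b := by rw [neg_one_smul]; abel
  rw [this, B.inner_add_left', B.inner_smul_left']
  simp [sub_eq_add_neg]

/-- Key Cauchy–Schwarz-type lemma: if `p([x,x]) = 0` then `p([x,y]) = 0`. -/
lemma key (p : Seminorm ℂ Z) (hinc : D.Increasing p) (hstar : D.StarSeminorm p)
    (B : Gramian D E) (x y : E) (hx : p (B.inner x x) = 0) :
    p (B.inner x y) = 0 := by
  set z := B.inner x y with hz
  set zs := B.inner y x with hzs
  have expand : ∀ μ : ℂ, B.inner (x + μ • y) (x + μ • y)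
      = (B.inner x x + (μ * (starRingEnd ℂ) μ) • B.inner y y)
        + (((starRingEnd ℂ) μ) • zs + μ • z) := by
    intro μ
    simp only [B.inner_add_right, B.inner_smul_right, B.inner_add_left', B.inner_smul_left',
      smul_add, smul_smul]
    abel
  -- the main quantitative estimate
  have cone_w : ∀ w : Z,
      (∀ t : ℝ, (B.inner x x + ((t ^ 2 : ℝ) : ℂ) • B.inner y y) + (t : ℂ) • w ∈ D.cone) →
      p w = 0 := by
    intro w hw
    have hpyy : 0 ≤ p (B.inner y y) := apply_nonneg p _
    have hbd : ∀ t : ℝ, 0 < t → p w ≤ 3 * t * p (B.inner y y) := by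
      intro t ht
      set a : Z := B.inner x x + ((t ^ 2 : ℝ) : ℂ) • B.inner y y with ha
      have hc₁ : a + (t : ℂ) • w ∈ D.cone := hw t
      have hc₂ : a - (t : ℂ) • w ∈ D.cone := by
        have h2 := hw (-t)
        have e1 : ((-t) ^ 2 : ℝ) = (t ^ 2 : ℝ) := by ring
        rw [e1] at h2
        have e2 : a + ((-t : ℝ) : ℂ) • w = a - (t : ℂ) • w := by
          push_cast
          rw [neg_smul, sub_eq_add_neg]
        rwa [e2] at h2
      have h1 : p (a + (t : ℂ) • w) ≤ p (a + a) := by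
        refine hinc _ _ hc₁ ?_
        have e : (a + a) - (a + (t : ℂ) • w) = a - (t : ℂ) • w := by abel
        rw [e]; exact hc₂
      have hpa : p a ≤ t ^ 2 * p (B.inner y y) := by
        refine (map_add_le_add p _ _).trans ?_
        rw [hx, map_smul_eq_mul, zero_add]
        have : ‖((t ^ 2 : ℝ) : ℂ)‖ = t ^ 2 := by
          rw [Complex.norm_real, Real.norm_eq_abs, abs_of_nonneg (sq_nonneg t)]
        rw [this]
      have h2 : p ((t : ℂ) • w) ≤ 3 * (t ^ 2 * p (B.inner y y)) := by
        have e : (t : ℂ) • w = (a + (t : ℂ) • w) - a := by abel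
        calc p ((t : ℂ) • w) = p ((a + (t : ℂ) • w) - a) := by rw [← e]
          _ ≤ p (a + (t : ℂ) • w) + p a := map_sub_le_add p _ _
          _ ≤ p (a + a) + p a := by linarith
          _ ≤ (p a + p a) + p a := by linarith [map_add_le_add p a a]
          _ ≤ 3 * (t ^ 2 * p (B.inner y y)) := by linarith
      have e3 : p ((t : ℂ) • w) = t * p w := by
        rw [map_smul_eq_mul]
        congr 1
        rw [Complex.norm_real, Real.norm_eq_abs, abs_of_pos ht]
      rw [e3] at h2
      nlinarith
    by_contra hne
    have hpos : 0 < p w := lt_of_le_of_ne (apply_nonneg p w) (Ne.symm hne)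
    set c := p (B.inner y y) with hc
    have hc1 : (0 : ℝ) < 6 * (c + 1) := by positivity
    have h := hbd (p w / (6 * (c + 1))) (by positivity)
    have e : 3 * (p w / (6 * (c + 1))) * c = 3 * p w * c / (6 * (c + 1)) := by ring
    rw [e] at h
    have h' : p w * (6 * (c + 1)) ≤ 3 * p w * c := (le_div_iff₀ hc1).mp h
    nlinarith
  have hw1 : p (zs + z) = 0 := by
    refine cone_w _ fun t => ?_
    have h := B.inner_self_mem (x + (t : ℂ) • y)
    rw [expand ((t : ℂ))] at h
    have e : (B.inner x x + ((t ^ 2 : ℝ) : ℂ) • B.inner y y) + (t : ℂ) • (zs + z)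
        = (B.inner x x + ((t : ℂ) * (starRingEnd ℂ) ((t : ℂ))) • B.inner y y)
          + (((starRingEnd ℂ) ((t : ℂ))) • zs + (t : ℂ) • z) := by
      rw [Complex.conj_ofReal, smul_add,
        show ((t ^ 2 : ℝ) : ℂ) = (t : ℂ) * (t : ℂ) by push_cast; ring]
    rw [e]; exact h
  have hw2 : p (Complex.I • z - Complex.I • zs) = 0 := by
    refine cone_w _ fun t => ?_
    have h := B.inner_self_mem (x + ((t : ℂ) * Complex.I) • y)
    rw [expand ((t : ℂ) * Complex.I)] at h
    have h1 : ((t : ℂ) * Complex.I) * (starRingEnd ℂ) ((t : ℂ) * Complex.I)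
        = ((t ^ 2 : ℝ) : ℂ) := by
      rw [Complex.mul_conj]
      norm_cast
      simp [Complex.normSq_mul, Complex.normSq_ofReal, Complex.normSq_I]
      ring
    have h2 : (starRingEnd ℂ) ((t : ℂ) * Complex.I) = -((t : ℂ) * Complex.I) := by
      rw [map_mul, Complex.conj_ofReal, Complex.conj_I]
      ring
    rw [h1, h2] at h
    have e : (B.inner x x + ((t ^ 2 : ℝ) : ℂ) • B.inner y y)
          + (t : ℂ) • (Complex.I • z - Complex.I • zs)
        = (B.inner x x + ((t ^ 2 : ℝ) : ℂ) • B.inner y y)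
          + ((-((t : ℂ) * Complex.I)) • zs + ((t : ℂ) * Complex.I) • z) := by
      rw [smul_sub, smul_smul, smul_smul, neg_smul]
      abel
    rw [e]; exact h
  have hz2 : (2 : ℂ) • z = (zs + z) + (-Complex.I) • (Complex.I • z - Complex.I • zs) := by
    have hI : (-Complex.I) * Complex.I = 1 := by
      rw [neg_mul, Complex.I_mul_I, neg_neg]
    rw [smul_sub, smul_smul, smul_smul, hI, one_smul, one_smul, two_smul]
    abel
  have hle : p ((2 : ℂ) • z) ≤ 0 := by
    rw [hz2]
    refine (map_add_le_add p _ _).trans ?_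
    rw [hw1, map_smul_eq_mul, hw2, mul_zero, add_zero]
  rw [map_smul_eq_mul] at hle
  have h2 : ‖(2 : ℂ)‖ = 2 := by norm_num
  rw [h2] at hle
  have := apply_nonneg p z
  linarith

/-- Variant of `key` with the degenerate vector in the second slot. -/
lemma key' (p : Seminorm ℂ Z) (hinc : D.Increasing p) (hstar : D.StarSeminorm p)
    (B : Gramian D E) (x y : E) (hx : p (B.inner x x) = 0) :
    p (B.inner y x) = 0 := by
  rw [← B.star_inner' x y, hstar]
  exact key p hinc hstar B x y hx

lemma tilde_eq_zero_iff (B : Gramian D E) (p : Seminorm ℂ Z) (x : E) :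
    B.tilde p x = 0 ↔ p (B.inner x x) = 0 := by
  unfold Gramian.tilde
  rw [Real.sqrt_eq_zero (apply_nonneg p _)]

/-- The kernel of the induced seminorm `p̃`, as a submodule. -/
def tildeKer (p : Seminorm ℂ Z) (hinc : D.Increasing p) (hstar : D.StarSeminorm p)
    (B : Gramian D E) : Submodule ℂ E where
  carrier := {x | B.tilde p x = 0}
  zero_mem' := by
    have h0 : B.inner (0 : E) 0 = 0 := by
      simpa using B.inner_smul_right 0 0 0
    simp only [Set.mem_setOf_eq, tilde_eq_zero_iff, h0, map_zero]
  add_mem' := by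
    intro a b ha hb
    simp only [Set.mem_setOf_eq, tilde_eq_zero_iff] at ha hb ⊢
    have e : B.inner (a + b) (a + b)
        = (B.inner a a + B.inner b a) + (B.inner a b + B.inner b b) := by
      rw [B.inner_add_right, B.inner_add_left', B.inner_add_left']
    refine le_antisymm ?_ (apply_nonneg p _)
    rw [e]
    have k1 : p (B.inner b a) = 0 := key' p hinc hstar B a b ha
    have k2 : p (B.inner a b) = 0 := key p hinc hstar B a b ha
    calc p _ ≤ p (B.inner a a + B.inner b a) + p (B.inner a b + B.inner b b) :=
          map_add_le_add p _ _
      _ ≤ (p (B.inner a a) + p (B.inner b a)) + (p (B.inner a b) + p (B.inner b b)) := by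
          gcongr <;> exact map_add_le_add p _ _
      _ ≤ 0 := by rw [ha, hb, k1, k2]; norm_num
  smul_mem' := by
    intro c x hx
    simp only [Set.mem_setOf_eq, tilde_eq_zero_iff] at hx ⊢
    rw [B.inner_smul_right, B.inner_smul_left', smul_smul, map_smul_eq_mul, hx, mul_zero]

lemma mem_tildeKer {p : Seminorm ℂ Z} {hinc : D.Increasing p} {hstar : D.StarSeminorm p}
    {B : Gramian D E} {x : E} :
    x ∈ tildeKer p hinc hstar B ↔ p (B.inner x x) = 0 :=
  tilde_eq_zero_iff B p x

/-- The quotient gramian on `E ⧸ Ĩ_p`. -/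
noncomputable def quotGram (p : Seminorm ℂ Z) (hinc : D.Increasing p)
    (hstar : D.StarSeminorm p) (B : Gramian D E) :
    (E ⧸ tildeKer p hinc hstar B) → (E ⧸ tildeKer p hinc hstar B) → Z ⧸ semKer p :=
  fun u v => Quotient.liftOn₂' u v
    (fun a b => Submodule.Quotient.mk (p := semKer p) (B.inner a b)) (by
    intro a₁ a₂ b₁ b₂ h1 h2
    have h1' : a₁ - b₁ ∈ tildeKer p hinc hstar B :=
      (Submodule.Quotient.eq _).mp (Quotient.sound' h1)
    have h2' : a₂ - b₂ ∈ tildeKer p hinc hstar B :=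
      (Submodule.Quotient.eq _).mp (Quotient.sound' h2)
    rw [Submodule.Quotient.eq]
    have e : B.inner a₁ a₂ - B.inner b₁ b₂
        = B.inner (a₁ - b₁) a₂ + B.inner b₁ (a₂ - b₂) := by
      rw [B.inner_sub_left', B.inner_sub_right']
      abel
    show p _ = 0
    rw [e]
    have k1 : p (B.inner (a₁ - b₁) a₂) = 0 :=
      key p hinc hstar B _ _ (mem_tildeKer.mp h1')
    have k2 : p (B.inner b₁ (a₂ - b₂)) = 0 :=
      key' p hinc hstar B _ _ (mem_tildeKer.mp h2')
    exact le_antisymm ((map_add_le_add p _ _).trans (by rw [k1, k2]; norm_num))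
      (apply_nonneg p _))

lemma quotGram_mk (p : Seminorm ℂ Z) (hinc : D.Increasing p)
    (hstar : D.StarSeminorm p) (B : Gramian D E) (x y : E) :
    quotGram p hinc hstar B (Submodule.Quotient.mk x) (Submodule.Quotient.mk y)
      = Submodule.Quotient.mk (B.inner x y) := rfl

end Gramian

end Aux

/-- An adjointable operator `T : E → F` between topological VE-spaces descends
to a well-defined adjointable operator `T_p : E_p → F_p` on the quotients, with adjoint
`(T*)_p`. -/
theorem statement13 {Z E F : Type*} [AddCommGroup Z] [Module ℂ Z] [TopologicalSpace Z]
    [AddCommGroup E] [Module ℂ E] [TopologicalSpace E]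
    [AddCommGroup F] [Module ℂ F] [TopologicalSpace F]
    (D : TopOrderedStarSpace Z)
    (BE : Gramian D.toOrderedStarData E) (BF : Gramian D.toOrderedStarData F)
    (hE : BE.IsVETopology {q : Seminorm ℂ Z | D.MemSStar q})
    (hF : BF.IsVETopology {q : Seminorm ℂ Z | D.MemSStar q})
    (p : Seminorm ℂ Z) (hp : D.MemSStar p)
    (T : E →ₗ[ℂ] F) (S : F →ₗ[ℂ] E) (hadj : BE.IsAdjoint BF T S) :
    -- well-definedness of the quotient operators
    (∀ x : E, BE.tilde p x = 0 → BF.tilde p (T x) = 0) ∧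
    (∀ y : F, BF.tilde p y = 0 → BE.tilde p (S y) = 0) ∧
    ∃ (NE : Submodule ℂ E) (NF : Submodule ℂ F),
      (NE : Set E) = {x : E | BE.tilde p x = 0} ∧
      (NF : Set F) = {y : F | BF.tilde p y = 0} ∧
      ∃ (Tp : (E ⧸ NE) →ₗ[ℂ] (F ⧸ NF)) (Sp : (F ⧸ NF) →ₗ[ℂ] (E ⧸ NE))
        (GE : (E ⧸ NE) → (E ⧸ NE) → (Z ⧸ semKer p))
        (GF : (F ⧸ NF) → (F ⧸ NF) → (Z ⧸ semKer p)),
        -- the quotient operators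
        (∀ x : E, Tp (Submodule.Quotient.mk x) = Submodule.Quotient.mk (T x)) ∧
        (∀ y : F, Sp (Submodule.Quotient.mk y) = Submodule.Quotient.mk (S y)) ∧
        -- the quotient gramians
        (∀ x y : E, GE (Submodule.Quotient.mk x) (Submodule.Quotient.mk y)
            = Submodule.Quotient.mk (BE.inner x y)) ∧
        (∀ x y : F, GF (Submodule.Quotient.mk x) (Submodule.Quotient.mk y)
            = Submodule.Quotient.mk (BF.inner x y)) ∧
        -- `T_p` is adjointable with adjoint `(T*)_p`
        (∀ (u : E ⧸ NE) (v : F ⧸ NF), GF (Tp u) v = GE u (Sp v)) := by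
  obtain ⟨hcont, hinc, hstar⟩ := hp
  refine ⟨?_, ?_, ?_⟩
  · intro x hx
    rw [Gramian.tilde_eq_zero_iff] at hx ⊢
    rw [hadj x (T x)]
    exact Gramian.key p hinc hstar BE x _ hx
  · intro y hy
    rw [Gramian.tilde_eq_zero_iff] at hy ⊢
    rw [show BE.inner (S y) (S y) = BF.inner (T (S y)) y from (hadj (S y) y).symm]
    exact Gramian.key' p hinc hstar BF y _ hy
  refine ⟨Gramian.tildeKer p hinc hstar BE, Gramian.tildeKer p hinc hstar BF, rfl, rfl, ?_⟩
  have hTle : Gramian.tildeKer p hinc hstar BE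
      ≤ (Gramian.tildeKer p hinc hstar BF).comap T := by
    intro x hx
    rw [Submodule.mem_comap, Gramian.mem_tildeKer] at *
    rw [hadj x (T x)]
    exact Gramian.key p hinc hstar BE x _ hx
  have hSle : Gramian.tildeKer p hinc hstar BF
      ≤ (Gramian.tildeKer p hinc hstar BE).comap S := by
    intro y hy
    rw [Submodule.mem_comap, Gramian.mem_tildeKer] at *
    rw [show BE.inner (S y) (S y) = BF.inner (T (S y)) y from (hadj (S y) y).symm]
    exact Gramian.key' p hinc hstar BF y _ hy
  refine ⟨Submodule.mapQ _ _ T hTle, Submodule.mapQ _ _ S hSle,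
    Gramian.quotGram p hinc hstar BE, Gramian.quotGram p hinc hstar BF,
    fun x => Submodule.mapQ_apply _ _ _ _, fun y => Submodule.mapQ_apply _ _ _ _,
    fun x y => rfl, fun x y => rfl, ?_⟩
  intro u v
  obtain ⟨x, rfl⟩ := Submodule.Quotient.mk_surjective _ u
  obtain ⟨y, rfl⟩ := Submodule.Quotient.mk_surjective _ v
  rw [Submodule.mapQ_apply, Submodule.mapQ_apply, Gramian.quotGram_mk, Gramian.quotGram_mk]
  exact congrArg Submodule.Quotient.mk (hadj x y)
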